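/- arXiv:1909.04602 — 4 statements merged into one kernel-verified Lean document; each statement's English description precedes it below -/
import Mathlib

section
/- Let 𝒫̃ := {P a probability measure on (Ω, ℱ) : P ≪ P' for some P' ∈ 𝒫 and ∫ |X| dP < ∞}. Then 𝒫̃ and 𝒫 have the same polar sets, and inf{x ∈ ℝ : X ≤ x 𝒫-q.s.} = sup_{P ∈ 𝒫̃} ∫ X dP, the equality holding in ℝ ∪ {+∞} with the convention inf ∅ := +∞. -/
open MeasureTheory Filter Topology

namespace Paper

variable {Ω : Type*} [MeasurableSpace Ω]

/-- `N` is a `Ps`-polar set: it is contained in a measurable set which is null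
for every measure in `Ps`. -/
def Polar (Ps : Set (Measure Ω)) (N : Set Ω) : Prop :=
  ∃ N' : Set Ω, MeasurableSet N' ∧ N ⊆ N' ∧ ∀ P ∈ Ps, P N' = 0

/-- `X ≤ Y` holds `Ps`-quasi surely. -/
def LeQS (Ps : Set (Measure Ω)) (X Y : Ω → ℝ) : Prop :=
  Polar Ps {ω | ¬ X ω ≤ Y ω}

/-- `X = Y` holds `Ps`-quasi surely. -/
def EqQS (Ps : Set (Measure Ω)) (X Y : Ω → ℝ) : Prop :=
  Polar Ps {ω | X ω ≠ Y ω}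

/-- The set of quasi-sure bounds of `X` relative to the weight `W`:
all `m ≥ 0` such that `|X| ≤ m • W` quasi surely. -/
def Bounds (Ps : Set (Measure Ω)) (W X : Ω → ℝ) : Set ℝ :=
  {m | 0 ≤ m ∧ Polar Ps {ω | m * W ω < |X ω|}}

/-- Membership in the space `L^W`. -/
def MemLW (Ps : Set (Measure Ω)) (W X : Ω → ℝ) : Prop :=
  Measurable X ∧ (Bounds Ps W X).Nonempty

/-- The norm `‖X‖_W` (for `W = 1` this is the quasi-sure sup-norm `‖·‖_{Ps,∞}`). -/
noncomputable def normW (Ps : Set (Measure Ω)) (W X : Ω → ℝ) : ℝ :=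
  sInf (Bounds Ps W X)

/-- `Kc` is a convex cone of measurable functions containing `0`. -/
def IsConvexCone (Kc : Set (Ω → ℝ)) : Prop :=
  (∀ k ∈ Kc, Measurable k) ∧ (fun _ => (0 : ℝ)) ∈ Kc ∧
  (∀ k ∈ Kc, ∀ c : ℝ, 0 ≤ c → (fun ω => c * k ω) ∈ Kc) ∧
  (∀ k₁ ∈ Kc, ∀ k₂ ∈ Kc, (fun ω => k₁ ω + k₂ ω) ∈ Kc)

/-- `Kc_λ`: the elements of `Kc` bounded below by `-λ • W` quasi surely. -/
def Klam (Ps : Set (Measure Ω)) (W : Ω → ℝ) (Kc : Set (Ω → ℝ)) (l : ℝ) : Set (Ω → ℝ) :=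
  {k ∈ Kc | LeQS Ps (fun ω => -l * W ω) k}

/-- The cone `𝒞` of claims super-replicable at zero cost. -/
def coneC (Ps : Set (Measure Ω)) (W : Ω → ℝ) (Kc : Set (Ω → ℝ)) : Set (Ω → ℝ) :=
  {X | MemLW Ps W X ∧ ∃ k ∈ Kc, LeQS Ps X k}

/-- The set `𝒞_λ`. -/
def coneCLam (Ps : Set (Measure Ω)) (W : Ω → ℝ) (Kc : Set (Ω → ℝ)) (l : ℝ) : Set (Ω → ℝ) :=
  {X | MemLW Ps W X ∧ ∃ k ∈ Klam Ps W Kc l, LeQS Ps X k}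

/-- The sensitive cone `𝒞̃`. -/
def coneCTilde (Ps : Set (Measure Ω)) (W : Ω → ℝ) (Kc : Set (Ω → ℝ)) : Set (Ω → ℝ) :=
  {X | MemLW Ps W X ∧ ∀ P ∈ Ps, ∃ k ∈ Kc, ∀ᵐ ω ∂P, X ω ≤ k ω}

/-- The sensitive set `𝒞̃_λ`. -/
def coneCTildeLam (Ps : Set (Measure Ω)) (W : Ω → ℝ) (Kc : Set (Ω → ℝ)) (l : ℝ) :
    Set (Ω → ℝ) :=
  {X | MemLW Ps W X ∧ ∀ P ∈ Ps, ∃ k ∈ Klam Ps W Kc l, ∀ᵐ ω ∂P, X ω ≤ k ω}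

/-- `𝒞̂ = ⋃_{λ ≥ 0} 𝒞̃_λ`. -/
def coneCHat (Ps : Set (Measure Ω)) (W : Ω → ℝ) (Kc : Set (Ω → ℝ)) : Set (Ω → ℝ) :=
  ⋃ l ∈ {r : ℝ | 0 ≤ r}, coneCTildeLam Ps W Kc l

/-- A set `A ⊆ L^W` is Fatou closed: it is stable under quasi-sure limits of
`‖·‖_W`-bounded sequences. -/
def FatouClosed (Ps : Set (Measure Ω)) (W : Ω → ℝ) (A : Set (Ω → ℝ)) : Prop :=
  ∀ X : ℕ → Ω → ℝ, (∀ n, X n ∈ A) → (∃ m : ℝ, ∀ n, m ∈ Bounds Ps W (X n)) →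
    ∀ Y : Ω → ℝ, MemLW Ps W Y →
      Polar Ps {ω | ¬ Tendsto (fun n => X n ω) atTop (nhds (Y ω))} → Y ∈ A

/-- Bounded measurable real-valued function. -/
def BddMeas (X : Ω → ℝ) : Prop := Measurable X ∧ ∃ c : ℝ, ∀ ω, |X ω| ≤ c

/-- sensitive No Free Lunch with Vanishing Risk: any quasi-surely nonnegative
bounded measurable `ξ` which is a `‖·‖_{Ps,∞}`-limit of elements of `𝒞̃ ∩ L^∞`
vanishes quasi surely. -/
def sNFLVR (Ps : Set (Measure Ω)) (W : Ω → ℝ) (Kc : Set (Ω → ℝ)) : Prop :=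
  ∀ ξ : Ω → ℝ, BddMeas ξ → LeQS Ps (fun _ => 0) ξ →
    (∃ X : ℕ → Ω → ℝ,
      (∀ n, X n ∈ coneCTilde Ps W Kc ∧ MemLW Ps (fun _ => 1) (X n)) ∧
      Tendsto (fun n => normW Ps (fun _ => 1) (fun ω => X n ω - ξ ω)) atTop (nhds 0)) →
    EqQS Ps ξ (fun _ => 0)

/-- No Arbitrage for the cone `Kc`. -/
def NA (Ps : Set (Measure Ω)) (Kc : Set (Ω → ℝ)) : Prop :=
  ∀ k ∈ Kc, LeQS Ps (fun _ => 0) k → EqQS Ps k (fun _ => 0)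

/-- `Ps_W`: probability measures dominated by some member of `Ps` and integrating `W`. -/
def PW (Ps : Set (Measure Ω)) (W : Ω → ℝ) : Set (Measure Ω) :=
  {Q | IsProbabilityMeasure Q ∧ (∃ P ∈ Ps, Q ≪ P) ∧ Integrable W Q}

/-- An approximate separating class `(Q_n)_{n ≥ 1}`. -/
def ApproxSep (Ps : Set (Measure Ω)) (W : Ω → ℝ) (Kc : Set (Ω → ℝ))
    (Q : ℕ → Measure Ω) : Prop :=
  (∀ n : ℕ, 1 ≤ n → Q n ∈ PW Ps W) ∧
  (∃ Pbar ∈ Ps, ∀ n : ℕ, 1 ≤ n → Q n ≪ Pbar) ∧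
  (∀ n : ℕ, 1 ≤ n → ∀ X ∈ coneCLam Ps W Kc (n : ℝ), ∫ ω, X ω ∂(Q n) ≤ 1 / (n : ℝ))

/-- `Q_app ≈ Ps` : the approximate separating classes and `Ps` share the same
polar sets. -/
def QappEquivP (Ps : Set (Measure Ω)) (W : Ω → ℝ) (Kc : Set (Ω → ℝ)) : Prop :=
  ∀ A : Set Ω, MeasurableSet A →
    ((∀ Q : ℕ → Measure Ω, ApproxSep Ps W Kc Q → ∀ n : ℕ, 1 ≤ n → Q n A = 0) ↔ Polar Ps A)

/-- The superhedging-type functional `ρ_A`, with values in `EReal` and the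
convention `inf ∅ = +∞`. -/
noncomputable def rho (A : Set (Ω → ℝ)) (X : Ω → ℝ) : EReal :=
  sInf {y : EReal | ∃ x : ℝ, y = (x : EReal) ∧ (fun ω => X ω - x) ∈ A}

end Paper

/-!
Restricting a measure `P ∈ 𝒫` to a set `A ∩ {|X| ≤ n}` of positive `P`-measure and normalising
gives a measure of `𝒫̃` concentrated on `A`; such sets exist whenever `P A ≠ 0`, since `A` is
their union over `n`. Hence a measurable set is `𝒫̃`-null iff it is `𝒫`-null. Applied to
`A = {X > x}`, this shows that `x` is a quasi-sure bound of `X` exactly when `∫ X dQ ≤ x` for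
every `Q ∈ 𝒫̃`, so the quasi-sure bounds are the real upper bounds of `{∫ X dQ : Q ∈ 𝒫̃}`, and
in `EReal` the infimum of the upper bounds of a set of reals is its supremum.
-/

open ProbabilityTheory

theorem EReal.sInf_coe_upperBounds (s : Set ℝ) :
    sInf ((↑) '' upperBounds s : Set EReal) = sSup ((↑) '' s) := by
  refine le_antisymm ?_ (le_sInf ?_)
  · by_contra! hlt
    obtain ⟨x, hsup, hinf⟩ := EReal.exists_between_coe_real hlt
    have hx : x ∈ upperBounds s := fun t ht =>
      EReal.coe_le_coe_iff.1 ((le_sSup (Set.mem_image_of_mem _ ht)).trans hsup.le)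
    exact (sInf_le (Set.mem_image_of_mem _ hx)).not_gt hinf
  · rintro _ ⟨x, hx, rfl⟩
    refine sSup_le ?_
    rintro _ ⟨t, ht, rfl⟩
    exact EReal.coe_le_coe_iff.2 (hx ht)

namespace Paper

section

variable {Ω : Type*} [MeasurableSpace Ω]

theorem polar_iff_forall_measure_eq_zero {Ps : Set (Measure Ω)} {N : Set Ω}
    (hN : MeasurableSet N) : Polar Ps N ↔ ∀ P ∈ Ps, P N = 0 :=
  ⟨fun ⟨_, _, hsub, hnull⟩ P hP => measure_mono_null hsub (hnull P hP),
    fun h => ⟨N, hN, subset_rfl, h⟩⟩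

theorem leQS_const_iff_ae {Ps : Set (Measure Ω)} {X : Ω → ℝ} (hX : Measurable X) (x : ℝ) :
    LeQS Ps X (fun _ => x) ↔ ∀ P ∈ Ps, ∀ᵐ ω ∂P, X ω ≤ x := by
  simp only [LeQS, ae_iff]
  exact polar_iff_forall_measure_eq_zero (measurableSet_le hX measurable_const).compl

theorem exists_isProbabilityMeasure_integrable_ae_mem (P : Measure Ω) [IsFiniteMeasure P]
    {X : Ω → ℝ} (hX : Measurable X) {A : Set Ω} (hA : MeasurableSet A) (hPA : P A ≠ 0) :
    ∃ Q : Measure Ω, IsProbabilityMeasure Q ∧ Q ≪ P ∧ Integrable X Q ∧ ∀ᵐ ω ∂Q, ω ∈ A := by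
  set B : ℕ → Set Ω := fun n => A ∩ {ω | |X ω| ≤ n}
  have hB : ∀ n, MeasurableSet (B n) := fun n =>
    hA.inter (measurableSet_le hX.abs measurable_const)
  have hAB : A = ⋃ n, B n := by
    ext ω
    simp only [B, Set.mem_iUnion, Set.mem_inter_iff, Set.mem_ofPred_eq, exists_and_left]
    exact (and_iff_left (exists_nat_ge _)).symm
  obtain ⟨n, hn⟩ : ∃ n, P (B n) ≠ 0 := by
    by_contra! h
    exact hPA (hAB ▸ measure_iUnion_null h)
  have hQB : ∀ᵐ ω ∂P[|B n], ω ∈ B n := ae_cond_mem (hB n)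
  refine ⟨P[|B n], cond_isProbabilityMeasure hn, cond_absolutelyContinuous,
    Integrable.of_bound hX.aestronglyMeasurable n (hQB.mono fun _ h => h.2),
    hQB.mono fun _ h => h.1⟩

theorem exists_mem_PW_ae_mem {Ps : Set (Measure Ω)} {X : Ω → ℝ} (hX : Measurable X)
    {P : Measure Ω} (hP : P ∈ Ps) [IsFiniteMeasure P] {A : Set Ω} (hA : MeasurableSet A)
    (hPA : P A ≠ 0) : ∃ Q ∈ PW Ps X, ∀ᵐ ω ∂Q, ω ∈ A := by
  obtain ⟨Q, hQprob, hQP, hXQ, hQA⟩ := exists_isProbabilityMeasure_integrable_ae_mem P hX hA hPA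
  exact ⟨Q, ⟨hQprob, ⟨P, hP, hQP⟩, hXQ⟩, hQA⟩

theorem polar_PW_iff {Ps : Set (Measure Ω)} (hPs : ∀ P ∈ Ps, IsFiniteMeasure P)
    {X : Ω → ℝ} (hX : Measurable X) (N : Set Ω) : Polar (PW Ps X) N ↔ Polar Ps N := by
  refine ⟨fun ⟨N', hN', hsub, hnull⟩ => ⟨N', hN', hsub, fun P hP => ?_⟩,
    fun ⟨N', hN', hsub, hnull⟩ => ⟨N', hN', hsub, fun Q ⟨_, ⟨P, hP, hQP⟩, _⟩ => hQP (hnull P hP)⟩⟩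
  by_contra hPN'
  have := hPs P hP
  obtain ⟨Q, hQ, hQN'⟩ := exists_mem_PW_ae_mem hX hP hN' hPN'
  have := hQ.1
  obtain ⟨ω, hω, hω'⟩ := (hQN'.and (measure_eq_zero_iff_ae_notMem.1 (hnull Q hQ))).exists
  exact hω' hω

theorem lt_integral_of_ae_lt {Q : Measure Ω} [IsProbabilityMeasure Q] {X : Ω → ℝ}
    (hXQ : Integrable X Q) {x : ℝ} (h : ∀ᵐ ω ∂Q, x < X ω) : x < ∫ ω, X ω ∂Q := by
  have hpos : 0 < ∫ ω, (X ω - x) ∂Q := by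
    rw [integral_pos_iff_support_of_nonneg_ae (h.mono fun _ hω => (sub_pos.2 hω).le)
      (hXQ.sub (integrable_const x))]
    refine pos_iff_ne_zero.2 fun h0 => ?_
    obtain ⟨ω, hlt, hω⟩ := (h.and (measure_eq_zero_iff_ae_notMem.1 h0)).exists
    exact hω (sub_ne_zero.2 hlt.ne')
  rw [integral_sub hXQ (integrable_const x), integral_const, probReal_univ, one_smul] at hpos
  linarith

theorem leQS_const_iff_forall_integral_le {Ps : Set (Measure Ω)}
    (hPs : ∀ P ∈ Ps, IsFiniteMeasure P) {X : Ω → ℝ} (hX : Measurable X) (x : ℝ) :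
    LeQS Ps X (fun _ => x) ↔ ∀ Q ∈ PW Ps X, ∫ ω, X ω ∂Q ≤ x := by
  constructor
  · intro hle Q hQ
    have := hQ.1
    have hae : ∀ᵐ ω ∂Q, X ω ≤ x :=
      (leQS_const_iff_ae hX x).1 (((polar_PW_iff hPs hX) _).2 hle) Q hQ
    simpa using integral_mono_ae hQ.2.2 (integrable_const x) hae
  · intro hint
    by_contra hle
    obtain ⟨P, hP, hPX⟩ : ∃ P ∈ Ps, P {ω | x < X ω} ≠ 0 := by
      simpa [leQS_const_iff_ae hX, ae_iff] using hle
    have := hPs P hP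
    obtain ⟨Q, hQ, hQX⟩ := exists_mem_PW_ae_mem hX hP (measurableSet_lt measurable_const hX) hPX
    have := hQ.1
    exact (lt_integral_of_ae_lt hQ.2.2 hQX).not_ge (hint Q hQ)

end

theorem qs_bound_as_sup_general {Ω : Type*} [MeasurableSpace Ω]
    (Ps : Set (Measure Ω))
    (hPsprob : ∀ P ∈ Ps, IsProbabilityMeasure P)
    (X : Ω → ℝ) (hX : Measurable X) :
    (∀ N : Set Ω,
      Polar {P : Measure Ω |
        IsProbabilityMeasure P ∧ (∃ P' ∈ Ps, P ≪ P') ∧ Integrable X P} N ↔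
      Polar Ps N) ∧
    sInf {y : EReal | ∃ x : ℝ, y = (x : EReal) ∧ LeQS Ps X (fun _ => x)} =
      sSup {y : EReal | ∃ P : Measure Ω,
        (IsProbabilityMeasure P ∧ (∃ P' ∈ Ps, P ≪ P') ∧ Integrable X P) ∧
        y = ((∫ ω, X ω ∂P : ℝ) : EReal)} := by
  have hPs : ∀ P ∈ Ps, IsFiniteMeasure P := fun P hP =>
    have := hPsprob P hP; inferInstance
  refine ⟨polar_PW_iff hPs hX, ?_⟩
  have hbounds : {y : EReal | ∃ x : ℝ, y = x ∧ LeQS Ps X (fun _ => x)} =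
      (↑) '' upperBounds ((fun Q => ∫ ω, X ω ∂Q) '' PW Ps X) := by
    ext y
    simp only [Set.mem_ofPred_eq, Set.mem_image, leQS_const_iff_forall_integral_le hPs hX]
    exact exists_congr fun x => by rw [mem_upperBounds, Set.forall_mem_image, eq_comm, and_comm]
  have hintegrals :
      {y : EReal | ∃ P : Measure Ω, P ∈ PW Ps X ∧ y = ((∫ ω, X ω ∂P : ℝ) : EReal)} =
        (↑) '' ((fun Q => ∫ ω, X ω ∂Q) '' PW Ps X) := by
    ext y
    simp [eq_comm]
  exact hbounds ▸ hintegrals ▸ EReal.sInf_coe_upperBounds _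

/-- **Remark (`rmk:rewrite`).** Let `𝒫̃` be the probability measures dominated
by some member of `𝒫` integrating `X`. Then `𝒫̃` and `𝒫` have the same polar
sets, and `inf{x ∈ ℝ : X ≤ x 𝒫-q.s.} = sup_{P ∈ 𝒫̃} ∫ X dP` in `ℝ ∪ {+∞}`. -/
theorem qs_bound_as_sup {Ω : Type*} [MeasurableSpace Ω]
    (Ps : Set (Measure Ω)) (hPsne : Ps.Nonempty)
    (hPsprob : ∀ P ∈ Ps, IsProbabilityMeasure P)
    (X : Ω → ℝ) (hX : Measurable X) :
    (∀ N : Set Ω,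
      Polar {P : Measure Ω |
        IsProbabilityMeasure P ∧ (∃ P' ∈ Ps, P ≪ P') ∧ Integrable X P} N ↔
      Polar Ps N) ∧
    sInf {y : EReal | ∃ x : ℝ, y = (x : EReal) ∧ LeQS Ps X (fun _ => x)} =
      sSup {y : EReal | ∃ P : Measure Ω,
        (IsProbabilityMeasure P ∧ (∃ P' ∈ Ps, P ≪ P') ∧ Integrable X P) ∧
        y = ((∫ ω, X ω ∂P : ℝ) : EReal)} :=
  qs_bound_as_sup_general Ps hPsprob X hX

end Paper
end

section
/- Assume 𝒞 is Fatou closed. Let P be a probability measure on (Ω, ℱ) with P(N) = 0 for every 𝒫-polar set N ∈ ℱ, let λ ≥ 0 and K ≥ λ, and set 𝒞_λ^K := {X ∈ 𝒞_λ : ‖X‖_W ≤ K}. Then j_P(𝒞_λ^K) is closed in the topology σ(L^∞(P), L^1(P)). -/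
/-!
A convex set is weakly closed as soon as it is norm closed (Hahn–Banach), so a weak limit `Y`
of `j_P(𝒞_λ^K)` is an `L²(P)`-limit, hence a `P`-a.s. limit of `X_n / W` with `X_n ∈ 𝒞_λ^K`.
Setting `X_n := -λW` on the `P`-null set where this fails makes the convergence hold everywhere.
Finally `𝒞_λ^K` inherits Fatou closedness from `𝒞`: the truncations `max(X_n, -λW)` still lie
in `𝒞`, so their limit is dominated by some `k ∈ 𝒦`, and `k ≥ -λW` puts `k` in `𝒦_λ`.
-/

open MeasureTheory Filter Topology

namespace Paper

variable {Ω : Type*} [MeasurableSpace Ω]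

/-- `𝒞_λ^K`: the elements of `𝒞_λ` with `‖·‖_W ≤ K` (equivalently, `K` is a
quasi-sure bound). -/
def coneCLamK (Ps : Set (Measure Ω)) (W : Ω → ℝ) (Kc : Set (Ω → ℝ)) (l K : ℝ) :
    Set (Ω → ℝ) :=
  {X ∈ coneCLam Ps W Kc l | K ∈ Bounds Ps W X}

end Paper

namespace Paper

section QuasiSure

variable {Ω : Type*} [MeasurableSpace Ω] {Ps : Set (Measure Ω)}

theorem Polar.sUnion {S : Set (Set Ω)} (hS : S.Countable) (h : ∀ s ∈ S, Polar Ps s) :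
    Polar Ps (⋃₀ S) := by
  choose! N hNm hsub hN0 using h
  refine ⟨⋃ s ∈ S, N s, .biUnion hS hNm, Set.sUnion_subset fun s hs => ?_, fun P hP => ?_⟩
  · exact (hsub s hs).trans (Set.subset_biUnion_of_mem hs)
  · exact (measure_biUnion_null_iff hS).2 fun s hs => hN0 s hs P hP

theorem Polar.mono {s t : Set Ω} (ht : Polar Ps t) (hst : s ⊆ t) : Polar Ps s :=
  let ⟨N, hNm, htN, hN0⟩ := ht
  ⟨N, hNm, hst.trans htN, hN0⟩

def quasiSure (Ps : Set (Measure Ω)) : Filter Ω :=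
  Filter.ofCountableUnion (Polar Ps) (fun _ hS h => Polar.sUnion hS h) fun _ ht _ hst => ht.mono hst

instance : CountableInterFilter (quasiSure Ps) :=
  Filter.countableInter_ofCountableUnion _ _ _

theorem eventually_quasiSure_iff {p : Ω → Prop} :
    (∀ᶠ ω in quasiSure Ps, p ω) ↔ Polar Ps {ω | ¬ p ω} :=
  Filter.mem_ofCountableUnion

theorem leQS_iff {X Y : Ω → ℝ} : LeQS Ps X Y ↔ ∀ᶠ ω in quasiSure Ps, X ω ≤ Y ω :=
  eventually_quasiSure_iff.symm

theorem mem_bounds_iff {W X : Ω → ℝ} {m : ℝ} :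
    m ∈ Bounds Ps W X ↔ 0 ≤ m ∧ ∀ᶠ ω in quasiSure Ps, |X ω| ≤ m * W ω := by
  simp only [Bounds, Set.mem_ofPred_eq, eventually_quasiSure_iff, not_le]

theorem ae_le_quasiSure {P : Measure Ω}
    (hP : ∀ N : Set Ω, MeasurableSet N → Polar Ps N → P N = 0) : ae P ≤ quasiSure Ps := by
  intro s hs
  obtain ⟨N, hNm, hsN, hN0⟩ := eventually_quasiSure_iff.1 hs
  exact measure_mono_null hsN (hP N hNm ⟨N, hNm, subset_rfl, hN0⟩)

theorem ae_abs_div_le_of_mem_bounds {P : Measure Ω}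
    (hP : ∀ N : Set Ω, MeasurableSet N → Polar Ps N → P N = 0) {W X : Ω → ℝ}
    (hW : ∀ ω, 0 < W ω) {K : ℝ} (hX : K ∈ Bounds Ps W X) : ∀ᵐ ω ∂P, |X ω / W ω| ≤ K := by
  filter_upwards [ae_le_quasiSure hP (mem_bounds_iff.1 hX).2] with ω hω
  rwa [abs_div, abs_of_pos (hW ω), div_le_iff₀ (hW ω)]

end QuasiSure

section Convexity

variable {Ω : Type*} [MeasurableSpace Ω] {Ps : Set (Measure Ω)} {W : Ω → ℝ} {Kc : Set (Ω → ℝ)}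

theorem IsConvexCone.convex (hKc : IsConvexCone Kc) : Convex ℝ Kc :=
  fun _ h₁ _ h₂ a b ha hb _ => hKc.2.2.2 _ (hKc.2.2.1 _ h₁ a ha) _ (hKc.2.2.1 _ h₂ b hb)

theorem convex_klam (hKc : IsConvexCone Kc) (l : ℝ) : Convex ℝ (Klam Ps W Kc l) := by
  rintro k₁ ⟨hk₁, hk₁l⟩ k₂ ⟨hk₂, hk₂l⟩ a b ha hb hab
  refine ⟨hKc.convex hk₁ hk₂ ha hb hab, leQS_iff.2 ?_⟩
  filter_upwards [leQS_iff.1 hk₁l, leQS_iff.1 hk₂l] with ω h₁ h₂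
  simp only [Pi.add_apply, Pi.smul_apply, smul_eq_mul]
  linear_combination a * h₁ + b * h₂ + l * W ω * hab

theorem convex_setOf_mem_bounds (K : ℝ) : Convex ℝ {X : Ω → ℝ | K ∈ Bounds Ps W X} := by
  intro X₁ h₁ X₂ h₂ a b ha hb hab
  rw [Set.mem_ofPred_eq, mem_bounds_iff] at h₁ h₂ ⊢
  refine ⟨h₁.1, ?_⟩
  filter_upwards [h₁.2, h₂.2] with ω h₁ h₂
  calc |a * X₁ ω + b * X₂ ω| ≤ a * |X₁ ω| + b * |X₂ ω| := by
        simpa only [abs_mul, abs_of_nonneg ha, abs_of_nonneg hb]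
          using abs_add_le (a * X₁ ω) (b * X₂ ω)
    _ ≤ a * (K * W ω) + b * (K * W ω) := by gcongr
    _ = K * W ω := by linear_combination K * W ω * hab

theorem convex_coneCLamK (hKc : IsConvexCone Kc) (l K : ℝ) :
    Convex ℝ (coneCLamK Ps W Kc l K) := by
  rintro X₁ ⟨⟨⟨hm₁, -⟩, k₁, hk₁, hX₁⟩, hK₁⟩ X₂ ⟨⟨⟨hm₂, -⟩, k₂, hk₂, hX₂⟩, hK₂⟩ a b ha hb hab
  have hK := convex_setOf_mem_bounds K hK₁ hK₂ ha hb hab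
  refine ⟨⟨⟨(hm₁.const_smul a).add (hm₂.const_smul b), _, hK⟩, a • k₁ + b • k₂,
    convex_klam hKc l hk₁ hk₂ ha hb hab, leQS_iff.2 ?_⟩, hK⟩
  filter_upwards [leQS_iff.1 hX₁, leQS_iff.1 hX₂] with ω h₁ h₂
  simp only [Pi.add_apply, Pi.smul_apply, smul_eq_mul]
  gcongr

end Convexity

theorem convex_image_div_sub {Ω : Type*} {S : Set (Ω → ℝ)} (hS : Convex ℝ S) (W Y : Ω → ℝ) :
    Convex ℝ ((fun X ω => X ω / W ω - Y ω) '' S) := by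
  rintro _ ⟨X₁, h₁, rfl⟩ _ ⟨X₂, h₂, rfl⟩ a b ha hb hab
  refine ⟨a • X₁ + b • X₂, hS h₁ h₂ ha hb hab, funext fun ω => ?_⟩
  simp only [Pi.add_apply, Pi.smul_apply, smul_eq_mul]
  linear_combination (Y ω) * hab

theorem zero_mem_closure_of_forall_exists_abs_lt {E : Type*} [TopologicalSpace E]
    [AddCommGroup E] [Module ℝ E] [IsTopologicalAddGroup E] [ContinuousSMul ℝ E]
    [LocallyConvexSpace ℝ E] {B : Set E} (hB : Convex ℝ B)
    (h : ∀ f : E →L[ℝ] ℝ, ∀ ε > 0, ∃ w ∈ B, |f w| < ε) : (0 : E) ∈ closure B := by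
  by_contra h0
  obtain ⟨f, u, hfu, hu⟩ := geometric_hahn_banach_closed_point hB.closure isClosed_closure h0
  rw [map_zero] at hu
  obtain ⟨w, hw, hfw⟩ := h f (-u) (by linarith)
  linarith [hfu w (subset_closure hw), neg_abs_le (f w)]

theorem Lp.exists_seq_mem_ae_tendsto_of_mem_closure {α E : Type*} {m : MeasurableSpace α}
    {μ : Measure α} [NormedAddCommGroup E] {p : ENNReal} [Fact (1 ≤ p)] {B : Set (Lp E p μ)}
    {w : Lp E p μ} (hw : w ∈ closure B) :
    ∃ u : ℕ → Lp E p μ, (∀ n, u n ∈ B) ∧ ∀ᵐ ω ∂μ, Tendsto (fun n => u n ω) atTop (𝓝 (w ω)) := by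
  obtain ⟨u, huB, hu⟩ := mem_closure_iff_seq_limit.1 hw
  obtain ⟨ns, -, hns⟩ := (tendstoInMeasure_of_tendsto_Lp hu).exists_seq_tendsto_ae
  exact ⟨u ∘ ns, fun n => huB _, hns⟩

theorem exists_seq_mem_ae_tendsto_zero {Ω : Type*} [MeasurableSpace Ω] {P : Measure Ω}
    {S : Set (Ω → ℝ)} (hS : Convex ℝ S) (hL2 : ∀ f ∈ S, MemLp f 2 P)
    (h : ∀ g, MemLp g 2 P → ∀ ε > 0, ∃ f ∈ S, |∫ ω, f ω * g ω ∂P| < ε) :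
    ∃ f : ℕ → Ω → ℝ, (∀ n, f n ∈ S) ∧ ∀ᵐ ω ∂P, Tendsto (fun n => f n ω) atTop (𝓝 0) := by
  set B : Set (Lp ℝ 2 P) := {w | ∃ f ∈ S, w =ᵐ[P] f}
  have hB : Convex ℝ B := by
    rintro w₁ ⟨f₁, h₁, hw₁⟩ w₂ ⟨f₂, h₂, hw₂⟩ a b ha hb hab
    exact ⟨a • f₁ + b • f₂, hS h₁ h₂ ha hb hab, (Lp.coeFn_add _ _).trans <|
      ((Lp.coeFn_smul a w₁).trans (hw₁.const_smul a)).add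
        ((Lp.coeFn_smul b w₂).trans (hw₂.const_smul b))⟩
  have h0 : (0 : Lp ℝ 2 P) ∈ closure B := by
    refine zero_mem_closure_of_forall_exists_abs_lt hB fun φ ε hε => ?_
    set g := (InnerProductSpace.toDual ℝ (Lp ℝ 2 P)).symm φ
    obtain ⟨f, hf, hfg⟩ := h g (Lp.memLp g) ε hε
    have hfw := (hL2 f hf).coeFn_toLp
    have hφ : φ ((hL2 f hf).toLp f) = ∫ ω, f ω * g ω ∂P := by
      rw [← InnerProductSpace.toDual_symm_apply, L2.inner_def]
      exact integral_congr_ae (hfw.mono fun ω hω => by simp [hω, g])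
    exact ⟨_, ⟨f, hf, hfw⟩, hφ ▸ hfg⟩
  obtain ⟨u, huB, hu⟩ := Lp.exists_seq_mem_ae_tendsto_of_mem_closure h0
  choose f hf hfu using huB
  refine ⟨f, hf, ?_⟩
  filter_upwards [hu, ae_all_iff.2 hfu, Lp.coeFn_zero ℝ 2 P] with ω hω hfω h0ω
  simpa only [hfω, h0ω, Pi.zero_apply] using hω

section Fatou

variable {Ω : Type*} [MeasurableSpace Ω] {Ps : Set (Measure Ω)} {W : Ω → ℝ}
  {Kc : Set (Ω → ℝ)} {l K : ℝ}

theorem mem_bounds_of_tendsto {X : ℕ → Ω → ℝ} {Y : Ω → ℝ} (hX : ∀ n, K ∈ Bounds Ps W (X n))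
    (hXY : ∀ᶠ ω in quasiSure Ps, Tendsto (fun n => X n ω) atTop (𝓝 (Y ω))) :
    K ∈ Bounds Ps W Y := by
  simp only [mem_bounds_iff] at hX ⊢
  refine ⟨(hX 0).1, ?_⟩
  filter_upwards [eventually_countable_forall.2 fun n => (hX n).2, hXY] with ω hb ht
  exact le_of_tendsto' ht.abs hb

theorem max_neg_mul_mem_bounds (hW : ∀ ω, 0 ≤ W ω) (hl : 0 ≤ l) (hlK : l ≤ K) {X : Ω → ℝ}
    (hX : K ∈ Bounds Ps W X) : K ∈ Bounds Ps W (fun ω => max (X ω) (-l * W ω)) := by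
  rw [mem_bounds_iff] at hX ⊢
  refine ⟨hX.1, hX.2.mono fun ω hω => abs_max_le_max_abs_abs.trans (max_le hω ?_)⟩
  rw [abs_mul, abs_neg, abs_of_nonneg hl, abs_of_nonneg (hW ω)]
  exact mul_le_mul_of_nonneg_right hlK (hW ω)

theorem FatouClosed.coneCLamK (hFatou : FatouClosed Ps W (coneC Ps W Kc)) (hWm : Measurable W)
    (hW : ∀ ω, 0 ≤ W ω) (hl : 0 ≤ l) (hlK : l ≤ K) :
    FatouClosed Ps W (coneCLamK Ps W Kc l K) := by
  intro X hX _ Y hY hXY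
  rw [← eventually_quasiSure_iff] at hXY
  choose k hk hXk using fun n => (hX n).1.2
  have hXK n := max_neg_mul_mem_bounds hW hl hlK (hX n).2
  have hXl n : (fun ω => max (X n ω) (-l * W ω)) ∈ coneC Ps W Kc := by
    refine ⟨⟨(hX n).1.1.1.max (hWm.const_mul _), K, hXK n⟩, k n, (hk n).1, leQS_iff.2 ?_⟩
    filter_upwards [leQS_iff.1 (hXk n), leQS_iff.1 (hk n).2] with ω h₁ h₂ using max_le h₁ h₂
  have hYK : K ∈ Bounds Ps W Y := mem_bounds_of_tendsto (fun n => (hX n).2) hXY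
  have hYl : MemLW Ps W fun ω => max (Y ω) (-l * W ω) :=
    ⟨hY.1.max (hWm.const_mul _), K, max_neg_mul_mem_bounds hW hl hlK hYK⟩
  obtain ⟨-, k', hk', hYk'⟩ := hFatou _ hXl ⟨K, hXK⟩ _ hYl
    (eventually_quasiSure_iff.1 (hXY.mono fun ω h => h.max tendsto_const_nhds))
  rw [leQS_iff] at hYk'
  refine ⟨⟨hY, k', ⟨hk', leQS_iff.2 ?_⟩, leQS_iff.2 ?_⟩, hYK⟩
  · exact hYk'.mono fun ω h => (le_max_right _ _).trans h
  · exact hYk'.mono fun ω h => (le_max_left _ _).trans h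

theorem piecewise_mem_coneCLamK (hWm : Measurable W) (hW : ∀ ω, 0 ≤ W ω) (hl : 0 ≤ l)
    (hlK : l ≤ K) {s : Set Ω} [DecidablePred (· ∈ s)] (hs : MeasurableSet s) {X : Ω → ℝ}
    (hX : X ∈ coneCLamK Ps W Kc l K) :
    s.piecewise (fun ω => -l * W ω) X ∈ coneCLamK Ps W Kc l K := by
  obtain ⟨⟨⟨hXm, -⟩, k, hk, hXk⟩, hXK⟩ := hX
  have hK : K ∈ Bounds Ps W (s.piecewise (fun ω => -l * W ω) X) := by
    rw [mem_bounds_iff] at hXK ⊢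
    refine ⟨hXK.1, hXK.2.mono fun ω hω => ?_⟩
    by_cases hωs : ω ∈ s
    · rw [Set.piecewise_eq_of_mem _ _ _ hωs, abs_mul, abs_neg, abs_of_nonneg hl,
        abs_of_nonneg (hW ω)]
      exact mul_le_mul_of_nonneg_right hlK (hW ω)
    · rwa [Set.piecewise_eq_of_notMem _ _ _ hωs]
  refine ⟨⟨⟨(hWm.const_mul _).piecewise hs hXm, K, hK⟩, k, hk, leQS_iff.2 ?_⟩, hK⟩
  filter_upwards [leQS_iff.1 hXk, leQS_iff.1 hk.2] with ω h₁ h₂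
  by_cases hωs : ω ∈ s
  · rwa [Set.piecewise_eq_of_mem _ _ _ hωs]
  · rwa [Set.piecewise_eq_of_notMem _ _ _ hωs]

theorem exists_mem_coneCLamK_ae_eq_of_ae_tendsto (hFatou : FatouClosed Ps W (coneC Ps W Kc))
    (hWm : Measurable W) (hW : ∀ ω, 0 ≤ W ω) (hl : 0 ≤ l) (hlK : l ≤ K) {P : Measure Ω}
    {X : ℕ → Ω → ℝ} (hX : ∀ n, X n ∈ coneCLamK Ps W Kc l K) {Z : Ω → ℝ} (hZ : Measurable Z)
    (hXZ : ∀ᵐ ω ∂P, Tendsto (fun n => X n ω) atTop (𝓝 (Z ω))) :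
    ∃ Z' ∈ coneCLamK Ps W Kc l K, Z =ᵐ[P] Z' := by
  classical
  set N := toMeasurable P {ω | ¬ Tendsto (fun n => X n ω) atTop (𝓝 (Z ω))}
  have hN : P N = 0 := by rw [measure_toMeasurable]; exact ae_iff.1 hXZ
  have hNm : MeasurableSet N := measurableSet_toMeasurable P _
  have hX' n := piecewise_mem_coneCLamK hWm hW hl hlK hNm (hX n)
  have hconv : ∀ ω, Tendsto (fun n => N.piecewise (fun ω => -l * W ω) (X n) ω) atTop
      (𝓝 (N.piecewise (fun ω => -l * W ω) Z ω)) := by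
    intro ω
    by_cases hω : ω ∈ N
    · simp only [Set.piecewise_eq_of_mem _ _ _ hω]
      exact tendsto_const_nhds
    · simp only [Set.piecewise_eq_of_notMem _ _ _ hω]
      exact not_not.1 fun h => hω (subset_toMeasurable _ _ h)
  have hZ' : MemLW Ps W (N.piecewise (fun ω => -l * W ω) Z) :=
    ⟨(hWm.const_mul _).piecewise hNm hZ, K,
      mem_bounds_of_tendsto (fun n => (hX' n).2) (.of_forall hconv)⟩
  refine ⟨_, FatouClosed.coneCLamK hFatou hWm hW hl hlK _ hX' ⟨K, fun n => (hX' n).2⟩ _ hZ'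
    (eventually_quasiSure_iff.1 (.of_forall hconv)), ?_⟩
  filter_upwards [measure_eq_zero_iff_ae_notMem.1 hN] with ω hω
  exact (Set.piecewise_eq_of_notMem _ _ _ hω).symm

end Fatou

theorem jP_CLamK_weakly_closed_general {Ω : Type*} [MeasurableSpace Ω]
    (Ps : Set (Measure Ω))
    (W : Ω → ℝ) (hWmeas : Measurable W) (hW1 : ∀ ω, 1 ≤ W ω)
    (Kc : Set (Ω → ℝ)) (hKc : IsConvexCone Kc)
    (hFatou : FatouClosed Ps W (coneC Ps W Kc))
    (P : Measure Ω) (hP : IsProbabilityMeasure P)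
    (hPpolar : ∀ N : Set Ω, MeasurableSet N → Polar Ps N → P N = 0)
    (l K : ℝ) (hl : 0 ≤ l) (hK : l ≤ K) :
    ∀ Y : Ω → ℝ, Measurable Y → (∃ c : ℝ, ∀ᵐ ω ∂P, |Y ω| ≤ c) →
      (∀ ε : ℝ, 0 < ε → ∀ (k : ℕ) (g : Fin k → Ω → ℝ), (∀ i, Integrable (g i) P) →
        ∃ X ∈ coneCLamK Ps W Kc l K,
          ∀ i, |∫ ω, (X ω / W ω - Y ω) * g i ω ∂P| < ε) →
      ∃ X ∈ coneCLamK Ps W Kc l K, Y =ᵐ[P] fun ω => X ω / W ω := by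
  intro Y hY ⟨c, hc⟩ hcl
  have hWpos ω : 0 < W ω := one_pos.trans_le (hW1 ω)
  have hL2 : ∀ f ∈ (fun X ω => X ω / W ω - Y ω) '' coneCLamK Ps W Kc l K, MemLp f 2 P := by
    rintro _ ⟨X, hX, rfl⟩
    refine MemLp.of_bound ((hX.1.1.1.div hWmeas).sub hY).aestronglyMeasurable (K + c) ?_
    filter_upwards [ae_abs_div_le_of_mem_bounds hPpolar hWpos hX.2, hc] with ω hXω hYω
    exact (abs_sub _ _).trans (add_le_add hXω hYω)
  obtain ⟨f, hf, hf0⟩ := exists_seq_mem_ae_tendsto_zero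
    (convex_image_div_sub (convex_coneCLamK hKc l K) W Y) hL2 fun g hg ε hε => by
      obtain ⟨X, hX, hXg⟩ := hcl ε hε 1 (fun _ => g) fun _ => hg.integrable one_le_two
      exact ⟨_, ⟨X, hX, rfl⟩, hXg 0⟩
  choose X hX hXf using hf
  obtain ⟨Z, hZ, hYWZ⟩ := exists_mem_coneCLamK_ae_eq_of_ae_tendsto hFatou hWmeas
    (fun ω => (hWpos ω).le) hl hK hX (hY.mul hWmeas) <| hf0.mono fun ω hω => by
      have hXω n : (f n ω + Y ω) * W ω = X n ω := by
        rw [← hXf n, sub_add_cancel, div_mul_cancel₀ _ (hWpos ω).ne']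
      simpa only [hXω, zero_add, Pi.mul_apply] using (hω.add_const (Y ω)).mul_const (W ω)
  exact ⟨Z, hZ, hYWZ.mono fun ω h => eq_div_of_mul_eq (hWpos ω).ne' h⟩

/-- **Lemma (`lem:p_closure`).** Assume `𝒞` is Fatou closed. For a probability
`P` vanishing on all `𝒫`-polar sets and `K ≥ λ ≥ 0`, the image `j_P(𝒞_λ^K)` is
closed in the weak topology `σ(L^∞(P), L^1(P))`: any measurable `P`-essentially
bounded `Y` all of whose basic weak neighbourhoods meet `j_P(𝒞_λ^K)` lies in
`j_P(𝒞_λ^K)`. -/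
theorem jP_CLamK_weakly_closed {Ω : Type*} [MeasurableSpace Ω]
    (Ps : Set (Measure Ω)) (hPsne : Ps.Nonempty)
    (hPsprob : ∀ P ∈ Ps, IsProbabilityMeasure P)
    (W : Ω → ℝ) (hWmeas : Measurable W) (hW1 : ∀ ω, 1 ≤ W ω)
    (Kc : Set (Ω → ℝ)) (hKc : IsConvexCone Kc)
    (hFatou : FatouClosed Ps W (coneC Ps W Kc))
    (P : Measure Ω) (hP : IsProbabilityMeasure P)
    (hPpolar : ∀ N : Set Ω, MeasurableSet N → Polar Ps N → P N = 0)
    (l K : ℝ) (hl : 0 ≤ l) (hK : l ≤ K) :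
    ∀ Y : Ω → ℝ, Measurable Y → (∃ c : ℝ, ∀ᵐ ω ∂P, |Y ω| ≤ c) →
      (∀ ε : ℝ, 0 < ε → ∀ (k : ℕ) (g : Fin k → Ω → ℝ), (∀ i, Integrable (g i) P) →
        ∃ X ∈ coneCLamK Ps W Kc l K,
          ∀ i, |∫ ω, (X ω / W ω - Y ω) * g i ω ∂P| < ε) →
      ∃ X ∈ coneCLamK Ps W Kc l K, Y =ᵐ[P] fun ω => X ω / W ω :=
  jP_CLamK_weakly_closed_general Ps W hWmeas hW1 Kc hKc hFatou P hP hPpolar l K hl hK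

end Paper
end

section
/- Let P be a probability measure on (Ω, ℱ) with P(N) = 0 for every 𝒫-polar set N ∈ ℱ, let λ ≥ 0 and K ≥ λ, and set 𝒞_λ^K := {X ∈ 𝒞_λ : ‖X‖_W ≤ K}. Then j_P(𝒞_λ) ∩ {Y ∈ L^∞(P) : ‖Y‖_{L^∞(P)} ≤ K} = j_P(𝒞_λ^K). -/
open MeasureTheory Filter Topology

namespace Paper

private lemma polar_mono' {Ω : Type*} [MeasurableSpace Ω] {Ps : Set (Measure Ω)}
    {A B : Set Ω} (hAB : A ⊆ B) (hB : Polar Ps B) : Polar Ps A := by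
  obtain ⟨N', hm, hsub, hnull⟩ := hB
  exact ⟨N', hm, hAB.trans hsub, hnull⟩

private lemma polar_union' {Ω : Type*} [MeasurableSpace Ω] {Ps : Set (Measure Ω)}
    {A B : Set Ω} (hA : Polar Ps A) (hB : Polar Ps B) : Polar Ps (A ∪ B) := by
  obtain ⟨N1, hm1, hs1, hn1⟩ := hA
  obtain ⟨N2, hm2, hs2, hn2⟩ := hB
  refine ⟨N1 ∪ N2, hm1.union hm2, Set.union_subset_union hs1 hs2, fun P hP => ?_⟩
  exact measure_union_null (hn1 P hP) (hn2 P hP)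

/-- **Equation (`eq:KreinSmulian`).** For a probability `P` vanishing on all
`𝒫`-polar sets and `K ≥ λ ≥ 0`, one has
`j_P(𝒞_λ) ∩ {‖·‖_{L^∞(P)} ≤ K} = j_P(𝒞_λ^K)`. -/
theorem jP_CLam_ball_eq {Ω : Type*} [MeasurableSpace Ω]
    (Ps : Set (Measure Ω)) (hPsne : Ps.Nonempty)
    (hPsprob : ∀ P ∈ Ps, IsProbabilityMeasure P)
    (W : Ω → ℝ) (hWmeas : Measurable W) (hW1 : ∀ ω, 1 ≤ W ω)
    (Kc : Set (Ω → ℝ)) (hKc : IsConvexCone Kc)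
    (P : Measure Ω) (hP : IsProbabilityMeasure P)
    (hPpolar : ∀ N : Set Ω, MeasurableSet N → Polar Ps N → P N = 0)
    (l K : ℝ) (hl : 0 ≤ l) (hK : l ≤ K) :
    ∀ Y : Ω → ℝ, Measurable Y →
      (((∃ X ∈ coneCLam Ps W Kc l, Y =ᵐ[P] fun ω => X ω / W ω) ∧
          (∀ᵐ ω ∂P, |Y ω| ≤ K)) ↔
        ∃ X ∈ coneCLamK Ps W Kc l K, Y =ᵐ[P] fun ω => X ω / W ω) := by
  intro Y hYmeas
  have hK0 : 0 ≤ K := hl.trans hK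
  constructor
  · rintro ⟨⟨X, ⟨⟨⟨hXmeas, _⟩, k, hk, hXk⟩, hYX⟩⟩, hYK⟩
    set X' : Ω → ℝ := fun ω => max (min (X ω) (K * W ω)) (-(K * W ω)) with hX'def
    have hX'meas : Measurable X' :=
      (hXmeas.min (hWmeas.const_mul K)).max (hWmeas.const_mul K).neg
    have hW0 : ∀ ω, (0:ℝ) < W ω := fun ω => lt_of_lt_of_le one_pos (hW1 ω)
    have hbound : ∀ ω, |X' ω| ≤ K * W ω := by
      intro ω
      have hKW : 0 ≤ K * W ω := mul_nonneg hK0 (hW0 ω).le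
      rw [abs_le]
      exact ⟨le_max_right _ _,
        max_le ((min_le_right _ _)) (le_trans (neg_nonpos.mpr hKW) hKW)⟩
    have hKbound : K ∈ Bounds Ps W X' := by
      refine ⟨hK0, ∅, MeasurableSet.empty, fun ω hω => ?_, fun P _ => measure_empty⟩
      exact absurd (hω : K * W ω < |X' ω|) (not_lt.mpr (hbound ω))
    have hX'k : LeQS Ps X' k := by
      refine polar_mono' ?_ (polar_union' hXk hk.2)
      intro ω hω
      by_contra hcon
      push_neg at hcon
      rw [Set.mem_union] at hcon
      push_neg at hcon
      obtain ⟨h1, h2⟩ := hcon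
      simp only [Set.mem_setOf_eq, not_not] at h1 h2
      apply hω
      have hlK : -(K * W ω) ≤ -l * W ω := by
        have := mul_le_mul_of_nonneg_right hK (hW0 ω).le
        linarith
      exact max_le ((min_le_left _ _).trans (not_lt.mp h1)) (hlK.trans (not_lt.mp h2))
    refine ⟨X', ⟨⟨⟨hX'meas, ⟨K, hKbound⟩⟩, k, hk, hX'k⟩, hKbound⟩, ?_⟩
    filter_upwards [hYX, hYK] with ω h1 h2
    have hXle : |X ω| ≤ K * W ω := by
      have : |X ω / W ω| ≤ K := h1 ▸ h2
      rw [abs_div, abs_of_pos (hW0 ω), div_le_iff₀ (hW0 ω)] at this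
      linarith [this]
    have : X' ω = X ω := by
      rw [hX'def]
      have h3 : X ω ≤ K * W ω := (le_abs_self _).trans hXle
      have h4 : -(K * W ω) ≤ X ω := neg_le_of_abs_le hXle
      simp [min_eq_left h3, max_eq_left h4]
    rw [h1, this]
  · rintro ⟨X, ⟨⟨hXC, hXb⟩, hYX⟩⟩
    refine ⟨⟨X, hXC, hYX⟩, ?_⟩
    obtain ⟨_, N', hm, hsub, hnull⟩ := hXb
    have hPN : P N' = 0 := hPpolar N' hm ⟨N', hm, subset_rfl, hnull⟩
    have hW0 : ∀ ω, (0:ℝ) < W ω := fun ω => lt_of_lt_of_le one_pos (hW1 ω)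
    have hae : ∀ᵐ ω ∂P, |X ω| ≤ K * W ω := by
      rw [ae_iff]
      refine measure_mono_null (fun ω hω => hsub ?_) hPN
      simpa using not_le.mp hω
    filter_upwards [hYX, hae] with ω h1 h2
    rw [h1, abs_div, abs_of_pos (hW0 ω), div_le_iff₀ (hW0 ω)]
    linarith [h2]

end Paper
end

section
/- Assume 𝒞 is Fatou closed and let λ ≥ 0. (i) For every probability measure P on (Ω, ℱ) vanishing on all 𝒫-polar sets, j_P(𝒞_λ) is closed in the topology σ(L^∞(P), L^1(P)). (ii) For every family 𝒫' of probability measures, each absolutely continuous with respect to some member of 𝒫, the set ⋂_{P ∈ 𝒫'} {X ∈ L^W : X = X' P-a.s. for some X' ∈ 𝒞_λ} is closed in the initial topology on L^W generated by the maps X ↦ ∫ X dP, P ∈ 𝒫_W. -/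
open MeasureTheory Filter Topology

/-
(i) `𝒞_λ` is convex, so by Hahn–Banach a `Y` that is weakly approximated by ratios `X / W`,
`X ∈ 𝒞_λ`, lies in their `L²(P)`-closure, and a subsequence converges `P`-a.s. Clamping the
ratios between `-λ` and a bound `c` of `Y`, and setting them to `-λ` on the null set where they
do not converge, gives a `‖·‖_W`-bounded sequence in `𝒞` that converges everywhere; Fatou
closedness puts its limit in `𝒞`, hence in `𝒞_λ` as it is `≥ -λW`; the unclamped limit, which
is `W Y` off a null set, lies below it and so is in `𝒞_λ` as well.
(ii) For `P ∈ 𝒫'` and `g ∈ L¹(P)`, `∫ (X / W) g dP` is a difference of two positive multiples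
of integrals `∫ X dQ` with `Q ∈ 𝒫_W` (densities `(g^± + 1) / W`), so approximation in the
`𝒫_W`-topology reduces (ii) to (i) applied to `Y / W`.
-/

theorem Convex.mem_closure_of_forall_abs_sub_lt {E : Type*} [TopologicalSpace E]
    [AddCommGroup E] [IsTopologicalAddGroup E] [Module ℝ E] [ContinuousSMul ℝ E]
    [LocallyConvexSpace ℝ E] {s : Set E} (hs : Convex ℝ s) {y : E}
    (h : ∀ f : StrongDual ℝ E, ∀ ε > 0, ∃ x ∈ s, |f x - f y| < ε) : y ∈ closure s := by
  by_contra hy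
  obtain ⟨f, u, hfu, huy⟩ := geometric_hahn_banach_closed_point hs.closure isClosed_closure hy
  obtain ⟨x, hx, hxy⟩ := h f (f y - u) (sub_pos.2 huy)
  linarith [hfu x (subset_closure hx), (abs_lt.1 hxy).1]

theorem MeasureTheory.Lp.mem_closure_of_forall_integral_mul {Ω : Type*} [MeasurableSpace Ω]
    {P : Measure Ω} {S : Set (Lp ℝ 2 P)}
    (hS : Convex ℝ S) {y : Lp ℝ 2 P}
    (h : ∀ g : Lp ℝ 2 P, ∀ ε > 0, ∃ x ∈ S, |∫ ω, (x ω - y ω) * g ω ∂P| < ε) :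
    y ∈ closure S := by
  refine hS.mem_closure_of_forall_abs_sub_lt fun f ε hε => ?_
  obtain ⟨x, hx, hxy⟩ := h ((InnerProductSpace.toDual ℝ _).symm f) ε hε
  refine ⟨x, hx, ?_⟩
  rw [← InnerProductSpace.toDual_symm_apply, ← InnerProductSpace.toDual_symm_apply,
    ← inner_sub_right, L2.inner_def]
  convert hxy using 2
  refine integral_congr_ae ?_
  filter_upwards [Lp.coeFn_sub x y] with ω hω
  rw [hω, Pi.sub_apply, RCLike.inner_apply, conj_trivial, mul_comm]

namespace Paper

variable {Ω : Type*} [MeasurableSpace Ω] {Ps : Set (Measure Ω)} {W : Ω → ℝ}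
  {Kc : Set (Ω → ℝ)} {l : ℝ}

def VanishesOnPolar (Ps : Set (Measure Ω)) (P : Measure Ω) : Prop :=
  ∀ N : Set Ω, MeasurableSet N → Polar Ps N → P N = 0

lemma polar_empty (Ps : Set (Measure Ω)) : Polar Ps (∅ : Set Ω) :=
  ⟨∅, MeasurableSet.empty, subset_rfl, fun _ _ => measure_empty⟩

lemma Polar.mono_s8 {N M : Set Ω} (h : Polar Ps M) (hNM : N ⊆ M) : Polar Ps N :=
  let ⟨M', hM', hMM', hnull⟩ := h
  ⟨M', hM', hNM.trans hMM', hnull⟩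

lemma Polar.union {N M : Set Ω} (hN : Polar Ps N) (hM : Polar Ps M) : Polar Ps (N ∪ M) := by
  obtain ⟨N', hN'meas, hNN', hN'⟩ := hN
  obtain ⟨M', hM'meas, hMM', hM'⟩ := hM
  exact ⟨N' ∪ M', hN'meas.union hM'meas, Set.union_subset_union hNN' hMM',
    fun P hP => measure_union_null (hN' P hP) (hM' P hP)⟩

lemma Polar.of_forall_notMem {N S : Set Ω} (hN : Polar Ps N) (h : ∀ ω ∉ N, ω ∉ S) :
    Polar Ps S :=
  hN.mono_s8 fun ω hS => by_contra fun hN => h ω hN hS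

lemma vanishesOnPolar_of_absolutelyContinuous {P P' : Measure Ω} (hP' : P' ∈ Ps)
    (hPP' : P ≪ P') : VanishesOnPolar Ps P :=
  fun _ _ ⟨_, _, hNN', hnull⟩ => measure_mono_null hNN' (hPP' (hnull _ hP'))

lemma VanishesOnPolar.ae_notMem {P : Measure Ω} (hP : VanishesOnPolar Ps P) {N : Set Ω}
    (hN : Polar Ps N) : ∀ᵐ ω ∂P, ω ∉ N := by
  obtain ⟨N', hN'meas, hNN', hnull⟩ := hN
  exact measure_eq_zero_iff_ae_notMem.mp
    (measure_mono_null hNN' (hP N' hN'meas ⟨N', hN'meas, subset_rfl, hnull⟩))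

lemma mem_bounds_mul_of_abs_le (hW1 : ∀ ω, 1 ≤ W ω) {r : Ω → ℝ} {c : ℝ} (hc : 0 ≤ c)
    (hrc : ∀ ω, |r ω| ≤ c) : c ∈ Bounds Ps W (fun ω => W ω * r ω) := by
  refine ⟨hc, (polar_empty Ps).of_forall_notMem fun ω _ => Set.notMem_ofPred_iff.2 (not_lt.2 ?_)⟩
  rw [abs_mul, abs_of_pos (one_pos.trans_le (hW1 ω)), mul_comm c]
  exact mul_le_mul_of_nonneg_left (hrc ω) (zero_le_one.trans (hW1 ω))

lemma ae_abs_le_of_mem_bounds {P : Measure Ω} (hP : VanishesOnPolar Ps P) {X : Ω → ℝ} {m : ℝ}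
    (hm : m ∈ Bounds Ps W X) : ∀ᵐ ω ∂P, |X ω| ≤ m * W ω := by
  filter_upwards [hP.ae_notMem hm.2] with ω hω
  simpa using hω

lemma MemLW.add {X Y : Ω → ℝ} (hX : MemLW Ps W X) (hY : MemLW Ps W Y) :
    MemLW Ps W (X + Y) := by
  obtain ⟨hXmeas, mX, hmX0, hmX⟩ := hX
  obtain ⟨hYmeas, mY, hmY0, hmY⟩ := hY
  refine ⟨hXmeas.add hYmeas, mX + mY, add_nonneg hmX0 hmY0,
    (hmX.union hmY).of_forall_notMem fun ω hω => Set.notMem_ofPred_iff.2 (not_lt.2 ?_)⟩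
  have hXω : |X ω| ≤ mX * W ω := not_lt.1 fun h => hω (Or.inl h)
  have hYω : |Y ω| ≤ mY * W ω := not_lt.1 fun h => hω (Or.inr h)
  rw [Pi.add_apply]
  linarith [abs_add_le (X ω) (Y ω)]

lemma MemLW.smul {X : Ω → ℝ} (hX : MemLW Ps W X) (a : ℝ) : MemLW Ps W (a • X) := by
  obtain ⟨hXmeas, m, hm0, hm⟩ := hX
  refine ⟨hXmeas.const_smul a, |a| * m, by positivity,
    hm.of_forall_notMem fun ω hω => Set.notMem_ofPred_iff.2 (not_lt.2 ?_)⟩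
  rw [Pi.smul_apply, smul_eq_mul, abs_mul, mul_assoc]
  exact mul_le_mul_of_nonneg_left (not_lt.1 hω) (abs_nonneg a)

lemma MemLW.sub {X Y : Ω → ℝ} (hX : MemLW Ps W X) (hY : MemLW Ps W Y) :
    MemLW Ps W (X - Y) := by
  simpa [sub_eq_add_neg] using hX.add (hY.smul (-1))

lemma MemLW.ae_abs_div_le (hW1 : ∀ ω, 1 ≤ W ω) {P : Measure Ω} (hP : VanishesOnPolar Ps P)
    {X : Ω → ℝ} (hX : MemLW Ps W X) : ∃ m, ∀ᵐ ω ∂P, |X ω / W ω| ≤ m := by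
  obtain ⟨-, m, hm⟩ := hX
  refine ⟨m, ?_⟩
  filter_upwards [ae_abs_le_of_mem_bounds hP hm] with ω hω
  rwa [abs_div, abs_of_pos (one_pos.trans_le (hW1 ω)), div_le_iff₀ (one_pos.trans_le (hW1 ω))]

lemma MemLW.integrable_div_mul (hW1 : ∀ ω, 1 ≤ W ω) (hWmeas : Measurable W) {P : Measure Ω}
    (hP : VanishesOnPolar Ps P) {X g : Ω → ℝ} (hX : MemLW Ps W X) (hg : Integrable g P) :
    Integrable (fun ω => X ω / W ω * g ω) P := by
  obtain ⟨m, hm⟩ := hX.ae_abs_div_le hW1 hP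
  exact hg.bdd_mul (hX.1.div hWmeas).aestronglyMeasurable hm

lemma MemLW.integrable {Q : Measure Ω} (hQ : Q ∈ PW Ps W) {X : Ω → ℝ} (hX : MemLW Ps W X) :
    Integrable X Q := by
  obtain ⟨-, ⟨P, hP, hQP⟩, hWQ⟩ := hQ
  obtain ⟨hXmeas, m, hm⟩ := hX
  exact (hWQ.const_mul m).mono' hXmeas.aestronglyMeasurable
    (ae_abs_le_of_mem_bounds (vanishesOnPolar_of_absolutelyContinuous hP hQP) hm)

lemma coneCLam_subset_coneC : coneCLam Ps W Kc l ⊆ coneC Ps W Kc :=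
  fun _ ⟨hX, k, hk, hXk⟩ => ⟨hX, k, hk.1, hXk⟩

lemma convex_coneCLam (hKc : IsConvexCone Kc) : Convex ℝ (coneCLam Ps W Kc l) := by
  intro X₁ h₁ X₂ h₂ a b ha hb hab
  obtain ⟨hX₁, k₁, ⟨hk₁, hk₁l⟩, hXk₁⟩ := h₁
  obtain ⟨hX₂, k₂, ⟨hk₂, hk₂l⟩, hXk₂⟩ := h₂
  refine ⟨(hX₁.smul a).add (hX₂.smul b), fun ω => a * k₁ ω + b * k₂ ω,
    ⟨hKc.2.2.2 _ (hKc.2.2.1 _ hk₁ a ha) _ (hKc.2.2.1 _ hk₂ b hb),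
      (hk₁l.union hk₂l).of_forall_notMem fun ω hω => not_not.2 ?_⟩,
    (hXk₁.union hXk₂).of_forall_notMem fun ω hω => not_not.2 ?_⟩
  · have h₁ : -l * W ω ≤ k₁ ω := not_not.1 fun h => hω (Or.inl h)
    have h₂ : -l * W ω ≤ k₂ ω := not_not.1 fun h => hω (Or.inr h)
    calc -l * W ω = a * (-l * W ω) + b * (-l * W ω) := by rw [← add_mul, hab, one_mul]
      _ ≤ a * k₁ ω + b * k₂ ω := by gcongr
  · have h₁ : X₁ ω ≤ k₁ ω := not_not.1 fun h => hω (Or.inl h)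
    have h₂ : X₂ ω ≤ k₂ ω := not_not.1 fun h => hω (Or.inr h)
    change a * X₁ ω + b * X₂ ω ≤ a * k₁ ω + b * k₂ ω
    gcongr

lemma mem_coneCLam_of_le_max {V X : Ω → ℝ} (hV : MemLW Ps W V) (hX : X ∈ coneCLam Ps W Kc l)
    (hVX : ∀ ω, V ω ≤ max (X ω) (-l * W ω)) : V ∈ coneCLam Ps W Kc l := by
  obtain ⟨-, k, hk, hXk⟩ := hX
  refine ⟨hV, k, hk, (hXk.union hk.2).of_forall_notMem fun ω hω => not_not.2 ?_⟩
  have h₁ : X ω ≤ k ω := not_not.1 fun h => hω (Or.inl h)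
  have h₂ : -l * W ω ≤ k ω := not_not.1 fun h => hω (Or.inr h)
  exact (hVX ω).trans (max_le h₁ h₂)

lemma mem_coneCLam_of_mem_coneC {X : Ω → ℝ} (hX : X ∈ coneC Ps W Kc)
    (hXl : ∀ ω, -l * W ω ≤ X ω) : X ∈ coneCLam Ps W Kc l := by
  obtain ⟨hXLW, k, hk, hXk⟩ := hX
  exact ⟨hXLW, k, ⟨hk, hXk.mono_s8 fun ω h h' => h ((hXl ω).trans h')⟩, hXk⟩

lemma abs_max_min_le {t c : ℝ} (hl : 0 ≤ l) (hlc : l ≤ c) : |max (min t c) (-l)| ≤ c :=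
  abs_le.2 ⟨by linarith [le_max_right (min t c) (-l)], max_le (min_le_right _ _) (by linarith)⟩

lemma mul_clamp_mem_coneCLam (hW1 : ∀ ω, 1 ≤ W ω) (hWmeas : Measurable W) (hl : 0 ≤ l)
    {X r : Ω → ℝ} (hX : X ∈ coneCLam Ps W Kc l) (hr : Measurable r) {c : ℝ} (hlc : l ≤ c)
    (hrX : ∀ ω, W ω * r ω ≤ max (X ω) (-l * W ω)) :
    (fun ω => W ω * max (min (r ω) c) (-l)) ∈ coneCLam Ps W Kc l := by
  refine mem_coneCLam_of_le_max ⟨hWmeas.mul ((hr.min measurable_const).max measurable_const), c,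
    mem_bounds_mul_of_abs_le hW1 (hl.trans hlc) fun ω => abs_max_min_le hl hlc⟩ hX fun ω => ?_
  have hW0 : 0 ≤ W ω := zero_le_one.trans (hW1 ω)
  calc W ω * max (min (r ω) c) (-l) ≤ W ω * max (r ω) (-l) := by gcongr; exact min_le_left _ _
    _ = max (W ω * r ω) (-l * W ω) := by rw [mul_max_of_nonneg _ _ hW0, mul_comm (W ω) (-l)]
    _ ≤ max (X ω) (-l * W ω) := max_le (hrX ω) (le_max_right _ _)

lemma mul_clamp_mem_coneCLam_of_tendsto (hW1 : ∀ ω, 1 ≤ W ω) (hWmeas : Measurable W)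
    (hFatou : FatouClosed Ps W (coneC Ps W Kc)) (hl : 0 ≤ l) {c : ℝ} (hlc : l ≤ c)
    {r : ℕ → Ω → ℝ} {r₀ : Ω → ℝ} (hr₀ : Measurable r₀)
    (hr : ∀ n, (fun ω => W ω * max (min (r n ω) c) (-l)) ∈ coneCLam Ps W Kc l)
    (hrr₀ : ∀ ω, Tendsto (fun n => r n ω) atTop (𝓝 (r₀ ω))) :
    (fun ω => W ω * max (min (r₀ ω) c) (-l)) ∈ coneCLam Ps W Kc l := by
  have hbd : ∀ t : Ω → ℝ, c ∈ Bounds Ps W (fun ω => W ω * max (min (t ω) c) (-l)) :=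
    fun t => mem_bounds_mul_of_abs_le hW1 (hl.trans hlc) fun ω => abs_max_min_le hl hlc
  refine mem_coneCLam_of_mem_coneC (hFatou _ (fun n => coneCLam_subset_coneC (hr n))
    ⟨c, fun n => hbd (r n)⟩ _ ⟨hWmeas.mul ((hr₀.min measurable_const).max measurable_const),
      c, hbd r₀⟩ ((polar_empty Ps).of_forall_notMem fun ω _ h => h ?_)) fun ω => ?_
  · exact (((hrr₀ ω).min tendsto_const_nhds).max tendsto_const_nhds).const_mul (W ω)
  · rw [mul_comm]
    exact mul_le_mul_of_nonneg_left (le_max_right _ _) (zero_le_one.trans (hW1 ω))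

lemma exists_coneCLam_ae_eq_div_of_tendsto (hW1 : ∀ ω, 1 ≤ W ω) (hWmeas : Measurable W)
    (hFatou : FatouClosed Ps W (coneC Ps W Kc)) (hl : 0 ≤ l) {P : Measure Ω}
    {Y : Ω → ℝ} (hYmeas : Measurable Y) {cY : ℝ} (hYbd : ∀ᵐ ω ∂P, |Y ω| ≤ cY)
    {X : ℕ → Ω → ℝ} (hX : ∀ n, X n ∈ coneCLam Ps W Kc l)
    (hXY : ∀ᵐ ω ∂P, Tendsto (fun n => X n ω / W ω) atTop (𝓝 (Y ω))) :
    ∃ X ∈ coneCLam Ps W Kc l, Y =ᵐ[P] fun ω => X ω / W ω := by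
  classical
  have hW0 : ∀ ω, 0 < W ω := fun ω => one_pos.trans_le (hW1 ω)
  obtain ⟨A, hA, hAae, hAconv, hAbd⟩ : ∃ A : Set Ω, MeasurableSet A ∧ (∀ᵐ ω ∂P, ω ∈ A) ∧
      (∀ ω ∈ A, Tendsto (fun n => X n ω / W ω) atTop (𝓝 (Y ω))) ∧ ∀ ω ∈ A, |Y ω| ≤ cY :=
    ⟨_, (measurableSet_tendsto_fun (fun n => (hX n).1.1.div hWmeas) hYmeas).inter
      (measurableSet_le hYmeas.abs measurable_const), hXY.and hYbd, fun _ h => h.1,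
      fun _ h => h.2⟩
  -- Off `A` the ratios are replaced by `-l`, so that they converge everywhere,
  -- as Fatou closedness requires.
  set r : ℕ → Ω → ℝ := fun n ω => if ω ∈ A then X n ω / W ω else -l
  set r₀ : Ω → ℝ := fun ω => if ω ∈ A then Y ω else -l
  have hr₀meas : Measurable r₀ := Measurable.ite hA hYmeas measurable_const
  set c := max l cY
  have hlc : l ≤ c := le_max_left _ _
  have hr₀ : ∀ ω, |r₀ ω| ≤ c := fun ω => by
    by_cases h : ω ∈ A
    · simp only [r₀, if_pos h]
      exact (hAbd ω h).trans (le_max_right l cY)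
    · simp only [r₀, if_neg h, abs_neg, abs_of_nonneg hl]
      exact hlc
  have hrr₀ : ∀ ω, Tendsto (fun n => r n ω) atTop (𝓝 (r₀ ω)) := fun ω => by
    by_cases h : ω ∈ A
    · simpa [r, r₀, h] using hAconv ω h
    · simp [r, r₀, h]
  have hV₀ := mul_clamp_mem_coneCLam_of_tendsto hW1 hWmeas hFatou hl hlc hr₀meas
    (fun n => mul_clamp_mem_coneCLam (r := r n) hW1 hWmeas hl (hX n)
      (Measurable.ite hA ((hX n).1.1.div hWmeas) measurable_const) hlc fun ω => by
        by_cases h : ω ∈ A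
        · simp [r, h, mul_div_cancel₀ _ (hW0 ω).ne']
        · simp [r, h, mul_comm]) hrr₀
  refine ⟨fun ω => W ω * r₀ ω, mem_coneCLam_of_le_max ⟨hWmeas.mul hr₀meas, c,
      mem_bounds_mul_of_abs_le hW1 (hl.trans hlc) hr₀⟩ hV₀ fun ω => le_max_of_le_left ?_, ?_⟩
  · rw [min_eq_left (abs_le.1 (hr₀ ω)).2]
    exact mul_le_mul_of_nonneg_left (le_max_left _ _) (hW0 ω).le
  · filter_upwards [hAae] with ω h
    simp [r₀, h, mul_div_cancel_left₀ _ (hW0 ω).ne']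

lemma exists_coneCLam_ae_eq_div_of_forall_integral (hW1 : ∀ ω, 1 ≤ W ω)
    (hWmeas : Measurable W) (hKc : IsConvexCone Kc) (hFatou : FatouClosed Ps W (coneC Ps W Kc))
    (hl : 0 ≤ l) {P : Measure Ω} [IsFiniteMeasure P] (hP : VanishesOnPolar Ps P)
    {Y : Ω → ℝ} (hYmeas : Measurable Y) {cY : ℝ} (hYbd : ∀ᵐ ω ∂P, |Y ω| ≤ cY)
    (happrox : ∀ ε > 0, ∀ g : Ω → ℝ, Integrable g P →
      ∃ X ∈ coneCLam Ps W Kc l, |∫ ω, (X ω / W ω - Y ω) * g ω ∂P| < ε) :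
    ∃ X ∈ coneCLam Ps W Kc l, Y =ᵐ[P] fun ω => X ω / W ω := by
  have hY : MemLp Y 2 P :=
    .of_bound hYmeas.aestronglyMeasurable cY (by simpa only [Real.norm_eq_abs] using hYbd)
  set S : Set (Lp ℝ 2 P) := {f | ∃ X ∈ coneCLam Ps W Kc l, f =ᵐ[P] fun ω => X ω / W ω}
  have hS : Convex ℝ S := by
    rintro f₁ ⟨X₁, hX₁, hf₁⟩ f₂ ⟨X₂, hX₂, hf₂⟩ a b ha hb hab
    refine ⟨a • X₁ + b • X₂, convex_coneCLam hKc hX₁ hX₂ ha hb hab, ?_⟩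
    filter_upwards [Lp.coeFn_add (a • f₁) (b • f₂), Lp.coeFn_smul a f₁, Lp.coeFn_smul b f₂,
      hf₁, hf₂] with ω h h₁ h₂ h₁' h₂'
    rw [h, Pi.add_apply, h₁, h₂, Pi.smul_apply, Pi.smul_apply, h₁', h₂']
    simp only [Pi.add_apply, Pi.smul_apply, smul_eq_mul]
    ring
  have hYS : hY.toLp Y ∈ closure S := by
    refine Lp.mem_closure_of_forall_integral_mul hS fun g ε hε => ?_
    obtain ⟨X, hX, hXg⟩ := happrox ε hε g ((Lp.memLp g).integrable one_le_two)
    obtain ⟨m, hm⟩ := hX.1.ae_abs_div_le hW1 hP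
    have hX2 : MemLp (fun ω => X ω / W ω) 2 P := .of_bound
      (hX.1.1.div hWmeas).aestronglyMeasurable m (by simpa only [Real.norm_eq_abs] using hm)
    refine ⟨hX2.toLp _, ⟨X, hX, hX2.coeFn_toLp⟩, ?_⟩
    convert hXg using 2
    refine integral_congr_ae ?_
    filter_upwards [hX2.coeFn_toLp, hY.coeFn_toLp] with ω h₁ h₂
    rw [h₁, h₂]
  obtain ⟨f, hfS, hf⟩ := mem_closure_iff_seq_limit.1 hYS
  choose X hX hfX using hfS
  obtain ⟨ns, -, hns⟩ := (tendstoInMeasure_of_tendsto_Lp hf).exists_seq_tendsto_ae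
  refine exists_coneCLam_ae_eq_div_of_tendsto hW1 hWmeas hFatou hl hYmeas hYbd
    (fun i => hX (ns i)) ?_
  filter_upwards [hns, ae_all_iff.2 hfX, hY.coeFn_toLp] with ω h₁ h₂ h₃
  simpa [h₂, h₃] using h₁

lemma exists_mem_PW_mul_integral_eq (hW1 : ∀ ω, 1 ≤ W ω) (hWmeas : Measurable W)
    {P P' : Measure Ω} [IsFiniteMeasure P] [NeZero P] (hP' : P' ∈ Ps) (hPP' : P ≪ P')
    {h : Ω → ℝ} (hmeas : Measurable h) (hint : Integrable h P) (hpos : ∀ ω, 0 < h ω) :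
    ∃ Q ∈ PW Ps W, ∃ c > 0, ∀ Z : Ω → ℝ, c * ∫ ω, Z ω ∂Q = ∫ ω, Z ω / W ω * h ω ∂P := by
  have hW0 : ∀ ω, 0 < W ω := fun ω => one_pos.trans_le (hW1 ω)
  have hhW : Integrable (fun ω => h ω / W ω) P := by
    refine (hint.bdd_mul (c := 1) hWmeas.inv.aestronglyMeasurable (.of_forall fun ω => ?_)).congr
      (.of_forall fun ω => inv_mul_eq_div _ _)
    rw [Pi.inv_apply, norm_inv, Real.norm_of_nonneg (hW0 ω).le]
    exact inv_le_one_of_one_le₀ (hW1 ω)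
  set c := ∫ ω, h ω / W ω ∂P
  have hc : 0 < c := by
    rw [integral_pos_iff_support_of_nonneg (fun ω => (div_pos (hpos ω) (hW0 ω)).le) hhW,
      Function.support_eq_univ fun ω => (div_pos (hpos ω) (hW0 ω)).ne']
    exact pos_iff_ne_zero.2 (Measure.measure_univ_ne_zero.2 (NeZero.ne P))
  set d : Ω → ℝ := fun ω => h ω / W ω / c
  have hd0 : ∀ ω, 0 ≤ d ω := fun ω => div_nonneg (div_pos (hpos ω) (hW0 ω)).le hc.le
  have hdmeas : Measurable fun ω => (d ω).toNNReal :=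
    ((hmeas.div hWmeas).div_const c).real_toNNReal
  have hsmul : ∀ Z : Ω → ℝ, (fun ω => (d ω).toNNReal • Z ω) = fun ω => Z ω / W ω * h ω / c :=
    fun Z => funext fun ω => by
      rw [NNReal.smul_def, Real.coe_toNNReal _ (hd0 ω), smul_eq_mul]
      ring
  refine ⟨P.withDensity fun ω => (d ω).toNNReal, ⟨⟨?_⟩, ⟨P', hP',
    (withDensity_absolutelyContinuous _ _).trans hPP'⟩, ?_⟩, c, hc, fun Z => ?_⟩
  · rw [withDensity_apply _ MeasurableSet.univ, Measure.restrict_univ]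
    change ∫⁻ ω, ENNReal.ofReal (d ω) ∂P = 1
    rw [← ofReal_integral_eq_lintegral_ofReal (hhW.div_const c) (.of_forall hd0),
      integral_div, div_self hc.ne', ENNReal.ofReal_one]
  · rw [integrable_withDensity_iff_integrable_smul hdmeas, hsmul]
    refine (hint.div_const c).congr (.of_forall fun ω => ?_)
    field_simp [(hW0 ω).ne']
  · rw [integral_withDensity_eq_integral_smul hdmeas, hsmul, integral_div,
      mul_div_cancel₀ _ hc.ne']

lemma exists_coneCLam_abs_integral_mul_lt (hW1 : ∀ ω, 1 ≤ W ω) (hWmeas : Measurable W)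
    {P P' : Measure Ω} [IsFiniteMeasure P] [NeZero P] (hP' : P' ∈ Ps) (hPP' : P ≪ P')
    {Y : Ω → ℝ} (hY : MemLW Ps W Y)
    (happrox : ∀ ε > 0, ∀ Q₁ ∈ PW Ps W, ∀ Q₂ ∈ PW Ps W, ∃ X, MemLW Ps W X ∧
      (∃ X' ∈ coneCLam Ps W Kc l, X =ᵐ[P] X') ∧
      |∫ ω, X ω ∂Q₁ - ∫ ω, Y ω ∂Q₁| < ε ∧ |∫ ω, X ω ∂Q₂ - ∫ ω, Y ω ∂Q₂| < ε)
    {ε : ℝ} (hε : 0 < ε) {g : Ω → ℝ} (hg : Integrable g P) :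
    ∃ X ∈ coneCLam Ps W Kc l, |∫ ω, (X ω / W ω - Y ω / W ω) * g ω ∂P| < ε := by
  have hP := vanishesOnPolar_of_absolutelyContinuous hP' hPP'
  set g' := hg.1.aemeasurable.mk g
  have hg'meas : Measurable g' := hg.1.aemeasurable.measurable_mk
  have hgg' : g =ᵐ[P] g' := hg.1.aemeasurable.ae_eq_mk
  have hg' : Integrable g' P := hg.congr hgg'
  -- `g' = h₁ - h₂`, and each `hᵢ / W`, normalised, is the `P`-density of a measure in `PW Ps W`;
  -- the `+ 1` keeps the normalising constants positive.
  set h₁ : Ω → ℝ := fun ω => max (g' ω) 0 + 1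
  set h₂ : Ω → ℝ := fun ω => max (-g' ω) 0 + 1
  have hh₁ : Integrable h₁ P := hg'.pos_part.add (integrable_const 1)
  have hh₂ : Integrable h₂ P := hg'.neg.pos_part.add (integrable_const 1)
  obtain ⟨Q₁, hQ₁, c₁, hc₁, hQ₁P⟩ := exists_mem_PW_mul_integral_eq (h := h₁) hW1 hWmeas hP' hPP'
    ((hg'meas.max measurable_const).add_const 1) hh₁ fun ω => by positivity
  obtain ⟨Q₂, hQ₂, c₂, hc₂, hQ₂P⟩ := exists_mem_PW_mul_integral_eq (h := h₂) hW1 hWmeas hP' hPP'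
    ((hg'meas.neg.max measurable_const).add_const 1) hh₂ fun ω => by positivity
  obtain ⟨X, hX, ⟨X', hX', hXX'⟩, hXQ₁, hXQ₂⟩ :=
    happrox (ε / (c₁ + c₂)) (by positivity) Q₁ hQ₁ Q₂ hQ₂
  refine ⟨X', hX', ?_⟩
  have hsub : ∀ Q ∈ PW Ps W, ∫ ω, X ω ∂Q - ∫ ω, Y ω ∂Q = ∫ ω, (X - Y) ω ∂Q :=
    fun Q hQ => (integral_sub (hX.integrable hQ) (hY.integrable hQ)).symm
  have key : ∫ ω, (X' ω / W ω - Y ω / W ω) * g ω ∂P =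
      c₁ * (∫ ω, X ω ∂Q₁ - ∫ ω, Y ω ∂Q₁) - c₂ * (∫ ω, X ω ∂Q₂ - ∫ ω, Y ω ∂Q₂) := by
    rw [hsub Q₁ hQ₁, hsub Q₂ hQ₂, hQ₁P, hQ₂P,
      ← integral_sub ((hX.sub hY).integrable_div_mul hW1 hWmeas hP hh₁)
        ((hX.sub hY).integrable_div_mul hW1 hWmeas hP hh₂)]
    refine integral_congr_ae ?_
    filter_upwards [hXX', hgg'] with ω hXω hgω
    rw [← hXω, hgω, Pi.sub_apply]
    linear_combination (-(X ω - Y ω) / W ω) * max_zero_sub_max_neg_zero_eq_self (g' ω)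
  rw [key]
  calc _ ≤ c₁ * |∫ ω, X ω ∂Q₁ - ∫ ω, Y ω ∂Q₁| + c₂ * |∫ ω, X ω ∂Q₂ - ∫ ω, Y ω ∂Q₂| := by
        refine (abs_sub _ _).trans_eq ?_
        rw [abs_mul, abs_mul, abs_of_pos hc₁, abs_of_pos hc₂]
    _ < c₁ * (ε / (c₁ + c₂)) + c₂ * (ε / (c₁ + c₂)) := by gcongr
    _ = ε := by field_simp

lemma exists_coneCLam_ae_eq_of_forall_integral (hW1 : ∀ ω, 1 ≤ W ω) (hWmeas : Measurable W)
    (hKc : IsConvexCone Kc) (hFatou : FatouClosed Ps W (coneC Ps W Kc)) (hl : 0 ≤ l)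
    {P P' : Measure Ω} [IsFiniteMeasure P] [NeZero P] (hP' : P' ∈ Ps) (hPP' : P ≪ P')
    {Y : Ω → ℝ} (hY : MemLW Ps W Y)
    (happrox : ∀ ε > 0, ∀ Q₁ ∈ PW Ps W, ∀ Q₂ ∈ PW Ps W, ∃ X, MemLW Ps W X ∧
      (∃ X' ∈ coneCLam Ps W Kc l, X =ᵐ[P] X') ∧
      |∫ ω, X ω ∂Q₁ - ∫ ω, Y ω ∂Q₁| < ε ∧ |∫ ω, X ω ∂Q₂ - ∫ ω, Y ω ∂Q₂| < ε) :
    ∃ X ∈ coneCLam Ps W Kc l, Y =ᵐ[P] X := by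
  have hP := vanishesOnPolar_of_absolutelyContinuous hP' hPP'
  obtain ⟨m, hm⟩ := hY.ae_abs_div_le hW1 hP
  obtain ⟨X, hX, hYX⟩ := exists_coneCLam_ae_eq_div_of_forall_integral hW1 hWmeas hKc hFatou hl
    hP (hY.1.div hWmeas) hm fun ε hε g hg =>
      exists_coneCLam_abs_integral_mul_lt hW1 hWmeas hP' hPP' hY happrox hε hg
  refine ⟨X, hX, ?_⟩
  filter_upwards [hYX] with ω h
  exact (div_left_inj' (one_pos.trans_le (hW1 ω)).ne').1 h

end Paper

namespace Paper

theorem sensitive_CLam_closed_general {Ω : Type*} [MeasurableSpace Ω]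
    (Ps : Set (Measure Ω))
    (W : Ω → ℝ) (hWmeas : Measurable W) (hW1 : ∀ ω, 1 ≤ W ω)
    (Kc : Set (Ω → ℝ)) (hKc : IsConvexCone Kc)
    (hFatou : FatouClosed Ps W (coneC Ps W Kc))
    (l : ℝ) (hl : 0 ≤ l) :
    (∀ P : Measure Ω, IsProbabilityMeasure P →
      (∀ N : Set Ω, MeasurableSet N → Polar Ps N → P N = 0) →
      ∀ Y : Ω → ℝ, Measurable Y → (∃ c : ℝ, ∀ᵐ ω ∂P, |Y ω| ≤ c) →
        (∀ ε : ℝ, 0 < ε → ∀ (k : ℕ) (g : Fin k → Ω → ℝ), (∀ i, Integrable (g i) P) →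
          ∃ X ∈ coneCLam Ps W Kc l,
            ∀ i, |∫ ω, (X ω / W ω - Y ω) * g i ω ∂P| < ε) →
        ∃ X ∈ coneCLam Ps W Kc l, Y =ᵐ[P] fun ω => X ω / W ω) ∧
    (∀ Ps' : Set (Measure Ω),
      (∀ P ∈ Ps', IsProbabilityMeasure P ∧ ∃ P'' ∈ Ps, P ≪ P'') →
      ∀ Y : Ω → ℝ, MemLW Ps W Y →
        (∀ ε : ℝ, 0 < ε → ∀ (k : ℕ) (Q : Fin k → Measure Ω), (∀ i, Q i ∈ PW Ps W) →
          ∃ X : Ω → ℝ,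
            (MemLW Ps W X ∧ ∀ P ∈ Ps', ∃ X' ∈ coneCLam Ps W Kc l, X =ᵐ[P] X') ∧
            ∀ i, |∫ ω, X ω ∂(Q i) - ∫ ω, Y ω ∂(Q i)| < ε) →
        (MemLW Ps W Y ∧ ∀ P ∈ Ps', ∃ X' ∈ coneCLam Ps W Kc l, Y =ᵐ[P] X')) := by
  refine ⟨fun P hP hPpolar Y hYmeas ⟨cY, hYbd⟩ happrox => ?_,
    fun Ps' hPs' Y hY happrox => ⟨hY, fun P hP => ?_⟩⟩
  · refine exists_coneCLam_ae_eq_div_of_forall_integral hW1 hWmeas hKc hFatou hl hPpolar hYmeas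
      hYbd fun ε hε g hg => ?_
    obtain ⟨X, hX, hXg⟩ := happrox ε hε 1 (fun _ => g) fun _ => hg
    exact ⟨X, hX, hXg 0⟩
  · obtain ⟨hPprob, P', hP', hPP'⟩ := hPs' P hP
    refine exists_coneCLam_ae_eq_of_forall_integral hW1 hWmeas hKc hFatou hl hP' hPP' hY
      fun ε hε Q₁ hQ₁ Q₂ hQ₂ => ?_
    obtain ⟨X, ⟨hX, hXPs'⟩, hXQ⟩ := happrox ε hε 2 ![Q₁, Q₂] (Fin.forall_fin_two.2 ⟨hQ₁, hQ₂⟩)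
    obtain ⟨X', hX', hXX'⟩ := hXPs' P hP
    exact ⟨X, hX, ⟨X', hX', hXX'⟩, hXQ 0, hXQ 1⟩

/-- **Proposition (`closed:sensitive`).** Assume `𝒞` is Fatou closed and let
`λ ≥ 0`. (i) For every probability `P` vanishing on all `𝒫`-polar sets,
`j_P(𝒞_λ)` is `σ(L^∞(P), L^1(P))`-closed. (ii) For every family `𝒫'` of
probability measures each dominated by a member of `𝒫`, the set
`⋂_{P ∈ 𝒫'} j_P⁻¹(j_P(𝒞_λ))` is closed in the initial topology on `L^W`
generated by the maps `X ↦ ∫ X dP`, `P ∈ 𝒫_W`. -/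
theorem sensitive_CLam_closed {Ω : Type*} [MeasurableSpace Ω]
    (Ps : Set (Measure Ω)) (hPsne : Ps.Nonempty)
    (hPsprob : ∀ P ∈ Ps, IsProbabilityMeasure P)
    (W : Ω → ℝ) (hWmeas : Measurable W) (hW1 : ∀ ω, 1 ≤ W ω)
    (Kc : Set (Ω → ℝ)) (hKc : IsConvexCone Kc)
    (hFatou : FatouClosed Ps W (coneC Ps W Kc))
    (l : ℝ) (hl : 0 ≤ l) :
    (∀ P : Measure Ω, IsProbabilityMeasure P →
      (∀ N : Set Ω, MeasurableSet N → Polar Ps N → P N = 0) →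
      ∀ Y : Ω → ℝ, Measurable Y → (∃ c : ℝ, ∀ᵐ ω ∂P, |Y ω| ≤ c) →
        (∀ ε : ℝ, 0 < ε → ∀ (k : ℕ) (g : Fin k → Ω → ℝ), (∀ i, Integrable (g i) P) →
          ∃ X ∈ coneCLam Ps W Kc l,
            ∀ i, |∫ ω, (X ω / W ω - Y ω) * g i ω ∂P| < ε) →
        ∃ X ∈ coneCLam Ps W Kc l, Y =ᵐ[P] fun ω => X ω / W ω) ∧
    (∀ Ps' : Set (Measure Ω),
      (∀ P ∈ Ps', IsProbabilityMeasure P ∧ ∃ P'' ∈ Ps, P ≪ P'') →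
      ∀ Y : Ω → ℝ, MemLW Ps W Y →
        (∀ ε : ℝ, 0 < ε → ∀ (k : ℕ) (Q : Fin k → Measure Ω), (∀ i, Q i ∈ PW Ps W) →
          ∃ X : Ω → ℝ,
            (MemLW Ps W X ∧ ∀ P ∈ Ps', ∃ X' ∈ coneCLam Ps W Kc l, X =ᵐ[P] X') ∧
            ∀ i, |∫ ω, X ω ∂(Q i) - ∫ ω, Y ω ∂(Q i)| < ε) →
        (MemLW Ps W Y ∧ ∀ P ∈ Ps', ∃ X' ∈ coneCLam Ps W Kc l, Y =ᵐ[P] X')) :=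
  sensitive_CLam_closed_general Ps W hWmeas hW1 Kc hKc hFatou l hl

end Paper
end
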